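/- arXiv:math/0403095 — 6 statements merged into one kernel-verified Lean document; each statement's English description precedes it below -/
import Mathlib

section
/- Every twisted identity w ∈ ι(θ) can be written as w = x·θ(x⁻¹) for some x ∈ W with ℓ(w) = 2ℓ(x), where ℓ denotes the Coxeter length function. -/
/-!
Tits' representation of `W` on `W × ZMod 2` yields a cocycle `η(w, t) ∈ ZMod 2`,
`η(uv, t) = η(v, t) + η(u, v t v⁻¹)`, which for a reflection `t` is `1` exactly when
`ℓ(wt) < ℓ(w)`; this is the strong exchange condition.

Let `w = x θ(x⁻¹) ≠ 1` and let `s` be a left descent of `w`. Since `θ(w) = w⁻¹`, `θ(s)` is a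
right descent. If `s w = w θ(s)`, the reflection `r = x⁻¹ s x` is `θ`-fixed, and both terms of
`η(w⁻¹, s) = η(x⁻¹, s) + η(θ x, r)` equal `η(x, r)`, contradicting `ℓ(w⁻¹ s) < ℓ(w⁻¹)`.
Hence `ℓ(s w θ(s)) = ℓ(w) - 2`, and induction on `ℓ(w)` gives `x` with `ℓ(w) ≥ 2ℓ(x)`;
the reverse inequality is subadditivity of `ℓ`.
-/

/-- The set of twisted identities `ι(θ) = {w·θ(w⁻¹) : w ∈ W}`. -/
def twistedIdentities {W : Type*} [Group W] (θ : W ≃* W) : Set W :=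
  {w : W | ∃ x : W, w = x * θ x⁻¹}

theorem ZMod.eq_one_of_ne_zero {a : ZMod 2} (h : a ≠ 0) : a = 1 := by
  revert a
  decide

theorem mul_mul_map_inv_mem_twistedIdentities {W : Type*} [Group W] (θ : W ≃* W) {w : W}
    (hw : w ∈ twistedIdentities θ) (u : W) : u * w * θ u⁻¹ ∈ twistedIdentities θ := by
  obtain ⟨x, rfl⟩ := hw
  exact ⟨u * x, by simp [mul_assoc]⟩

open List

namespace CoxeterSystem

variable {B W : Type*} [Group W] {M : CoxeterMatrix B} (cs : CoxeterSystem M W)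

local prefix:100 "s" => cs.simple
local prefix:100 "π" => cs.wordProd
local prefix:100 "ℓ" => cs.length
local prefix:100 "ris" => cs.rightInvSeq
local prefix:100 "lis" => cs.leftInvSeq

theorem alternatingWord_two_mul_succ (i j : B) (m : ℕ) :
    alternatingWord i j (2 * (m + 1)) = i :: j :: alternatingWord i j (2 * m) := by
  rw [show 2 * (m + 1) = 2 * m + 1 + 1 by ring, alternatingWord_succ', alternatingWord_succ']
  simp [parity_simps]

theorem reverse_alternatingWord_two_mul (i j : B) (m : ℕ) :
    (alternatingWord i j (2 * m)).reverse = alternatingWord j i (2 * m) := by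
  induction m with
  | zero => rfl
  | succ m ih =>
    rw [alternatingWord_two_mul_succ, show 2 * (m + 1) = 2 * m + 1 + 1 by ring,
      alternatingWord_succ, alternatingWord_succ, ← ih]
    simp

theorem prod_map_alternatingWord_two_mul {G : Type*} [Monoid G] (f : B → G) (i j : B) (m : ℕ) :
    ((alternatingWord i j (2 * m)).map f).prod = (f i * f j) ^ m := by
  induction m with
  | zero => simp [alternatingWord]
  | succ m ih => rw [alternatingWord_two_mul_succ, map_cons, map_cons, prod_cons, prod_cons, ih,
      pow_succ', mul_assoc]

theorem wordProd_alternatingWord_two_mul_add_one (i j : B) (k : ℕ) :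
    π (alternatingWord i j (2 * k + 1)) = s j * (s i * s j) ^ k := by
  rw [prod_alternatingWord_eq_mul_pow]
  simp [parity_simps, Nat.mul_add_div]

theorem leftInvSeq_alternatingWord_two_mul_eq_append (i j : B) :
    lis (alternatingWord i j (2 * M i j)) =
      (lis (alternatingWord i j (2 * M i j))).take (M i j) ++
        (lis (alternatingWord i j (2 * M i j))).take (M i j) := by
  set l := lis (alternatingWord i j (2 * M i j)) with hl
  have hlen : l.length = 2 * M i j := by simp [hl]
  conv_lhs => rw [← take_append_drop (M i j) l]
  congr 1
  refine ext_getElem (by simp [hlen]; omega) fun k hk _ => ?_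
  simp only [length_drop, hlen] at hk
  simp only [getElem_drop, getElem_take, hl]
  rw [getElem_leftInvSeq_alternatingWord cs i j _ _ (by omega),
    getElem_leftInvSeq_alternatingWord cs i j _ _ (by omega),
    wordProd_alternatingWord_two_mul_add_one, wordProd_alternatingWord_two_mul_add_one,
    pow_add, M.symmetric, simple_mul_simple_pow, one_mul]

theorem even_count_rightInvSeq_alternatingWord_two_mul [DecidableEq W] (i j : B) (t : W) :
    Even ((ris (alternatingWord i j (2 * M i j))).count t) := by
  rw [← reverse_alternatingWord_two_mul, rightInvSeq_reverse, count_reverse, M.symmetric,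
    leftInvSeq_alternatingWord_two_mul_eq_append, count_append]
  exact ⟨_, rfl⟩

theorem wordProd_alternatingWord_two_mul_eq_one (i j : B) :
    π (alternatingWord i j (2 * M i j)) = 1 := by
  simp [prod_alternatingWord_eq_mul_pow]

section ReflectionCocycle

variable [DecidableEq W]

def reflPermFun (i : B) (p : W × ZMod 2) : W × ZMod 2 :=
  (s i * p.1 * s i, p.2 + if p.1 = s i then 1 else 0)

theorem reflPermFun_involutive (i : B) : Function.Involutive (cs.reflPermFun i) := by
  rintro ⟨t, ε⟩
  have hconj : s i * (s i * t * s i) * s i = t := by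
    simp [mul_assoc]
  have hfix : s i * t * s i = s i ↔ t = s i := by
    constructor
    · intro h
      rw [← hconj, h, simple_mul_simple_self, one_mul]
    · rintro rfl
      simp
  simp only [reflPermFun, hfix, hconj, Prod.mk.injEq, true_and]
  split_ifs <;> simp [add_assoc, CharTwo.add_self_eq_zero]

def reflPerm (i : B) : Equiv.Perm (W × ZMod 2) :=
  (cs.reflPermFun_involutive i).toPerm

theorem prod_map_reflPerm_apply (ω : List B) (t : W) (ε : ZMod 2) :
    (ω.map cs.reflPerm).prod (t, ε) = (π ω * t * (π ω)⁻¹, ε + (ris ω).count t) := by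
  induction ω generalizing t ε with
  | nil => simp
  | cons i ω ih =>
    have hmem : π ω * t * (π ω)⁻¹ = s i ↔ (π ω)⁻¹ * s i * π ω = t := by
      constructor <;> intro h
      · rw [← h]; group
      · rw [← h]; group
    simp only [map_cons, prod_cons, Equiv.Perm.mul_apply, ih, reflPerm,
      Function.Involutive.coe_toPerm, reflPermFun, rightInvSeq, count_cons, beq_iff_eq, hmem,
      wordProd_cons, Prod.mk.injEq]
    constructor
    · rw [mul_inv_rev, inv_simple]; group
    · split_ifs <;> simp [add_assoc]

theorem isLiftable_reflPerm : M.IsLiftable cs.reflPerm := by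
  intro i j
  ext ⟨t, ε⟩ : 1
  rw [← prod_map_alternatingWord_two_mul, prod_map_reflPerm_apply,
    wordProd_alternatingWord_two_mul_eq_one,
    (ZMod.natCast_eq_zero_iff_even).2 (cs.even_count_rightInvSeq_alternatingWord_two_mul i j t)]
  simp

def reflRep : W →* Equiv.Perm (W × ZMod 2) :=
  cs.lift ⟨cs.reflPerm, cs.isLiftable_reflPerm⟩

def inversionParity (w t : W) : ZMod 2 :=
  (cs.reflRep w (t, 0)).2

theorem reflRep_simple (i : B) : cs.reflRep (s i) = cs.reflPerm i :=
  cs.lift_apply_simple cs.isLiftable_reflPerm i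

theorem reflRep_wordProd (ω : List B) : cs.reflRep (π ω) = (ω.map cs.reflPerm).prod := by
  rw [wordProd, map_list_prod, map_map]
  congr 2
  exact funext cs.reflRep_simple

theorem inversionParity_wordProd (ω : List B) (t : W) :
    cs.inversionParity (π ω) t = (ris ω).count t := by
  simp [inversionParity, reflRep_wordProd, prod_map_reflPerm_apply]

theorem reflRep_apply (w t : W) (ε : ZMod 2) :
    cs.reflRep w (t, ε) = (w * t * w⁻¹, ε + cs.inversionParity w t) := by
  obtain ⟨ω, rfl⟩ := cs.wordProd_surjective w
  rw [reflRep_wordProd, prod_map_reflPerm_apply, inversionParity_wordProd]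

theorem inversionParity_one (t : W) : cs.inversionParity 1 t = 0 := by
  simp [inversionParity]

theorem inversionParity_mul (u v t : W) :
    cs.inversionParity (u * v) t = cs.inversionParity v t + cs.inversionParity u (v * t * v⁻¹) := by
  have h : cs.reflRep (u * v) (t, 0) = cs.reflRep u (cs.reflRep v (t, 0)) := by
    rw [map_mul, Equiv.Perm.mul_apply]
  rw [reflRep_apply, reflRep_apply, reflRep_apply] at h
  simpa using congrArg Prod.snd h

theorem inversionParity_inv (u t : W) :
    cs.inversionParity u⁻¹ (u * t * u⁻¹) = cs.inversionParity u t := by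
  have h := cs.inversionParity_mul u⁻¹ u t
  rwa [inv_mul_cancel, inversionParity_one, eq_comm, CharTwo.add_eq_zero, eq_comm] at h

theorem inversionParity_simple_self (i : B) : cs.inversionParity (s i) (s i) = 1 := by
  simp [inversionParity, reflRep_simple, reflPerm, reflPermFun]

theorem inversionParity_self {t : W} (ht : cs.IsReflection t) : cs.inversionParity t t = 1 := by
  obtain ⟨u, i, rfl⟩ := ht
  have hfactor :
      cs.inversionParity (s i * u⁻¹) (u * s i * u⁻¹) = cs.inversionParity u (s i) + 1 := by
    rw [inversionParity_mul, inversionParity_inv, inv_inv,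
      show u⁻¹ * (u * s i * u⁻¹) * u = s i by group, inversionParity_simple_self]
  calc cs.inversionParity (u * s i * u⁻¹) (u * s i * u⁻¹)
      = cs.inversionParity (s i * u⁻¹) (u * s i * u⁻¹) + cs.inversionParity u (s i) := by
        rw [mul_assoc u, inversionParity_mul, ← mul_assoc u]
        congr 2
        simp [mul_assoc]
    _ = 1 := by rw [hfactor, add_right_comm, CharTwo.add_self_eq_zero, zero_add]

theorem length_mul_lt_of_inversionParity_eq_one {w t : W} (h : cs.inversionParity w t = 1) :
    ℓ (w * t) < ℓ w := by
  obtain ⟨ω, hω, rfl⟩ := cs.exists_isReduced w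
  rw [inversionParity_wordProd] at h
  have hmem : t ∈ ris ω := count_pos_iff.1 (Nat.pos_of_ne_zero fun h0 => by simp [h0] at h)
  exact (cs.isRightInversion_of_mem_rightInvSeq hω hmem).2

theorem inversionParity_eq_one_iff {w t : W} (ht : cs.IsReflection t) :
    cs.inversionParity w t = 1 ↔ ℓ (w * t) < ℓ w := by
  refine ⟨cs.length_mul_lt_of_inversionParity_eq_one, fun hlt =>
    ZMod.eq_one_of_ne_zero fun h0 => ?_⟩
  have h1 : cs.inversionParity (w * t) t = 1 := by
    rw [inversionParity_mul, ht.mul_self, ht.inv, one_mul, inversionParity_self cs ht, h0, add_zero]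
  have := cs.length_mul_lt_of_inversionParity_eq_one h1
  rw [mul_assoc, ht.mul_self, mul_one] at this
  omega

theorem inversionParity_map_of_map_eq (θ : W ≃* W) (hθℓ : ∀ u : W, ℓ (θ u) = ℓ u) {t : W}
    (ht : cs.IsReflection t) (hθt : θ t = t) (u : W) :
    cs.inversionParity (θ u) t = cs.inversionParity u t := by
  have eq_of_eq_one_iff : ∀ a b : ZMod 2, (a = 1 ↔ b = 1) → a = b := by decide
  refine eq_of_eq_one_iff _ _ ?_
  rw [cs.inversionParity_eq_one_iff ht, cs.inversionParity_eq_one_iff ht, ← hθt, ← map_mul, hθℓ,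
    hθℓ, hθt]

end ReflectionCocycle

theorem length_simple_mul_mul_simple_add_two {w : W} {i j : B} (hi : cs.IsLeftDescent w i)
    (hj : cs.IsRightDescent w j) (hne : s i * w ≠ w * s j) : ℓ (s i * w * s j) + 2 = ℓ w := by
  classical
  have hsj : cs.inversionParity w (s j) = 1 :=
    (cs.inversionParity_eq_one_iff (cs.isReflection_simple j)).2 hj
  have hconj : cs.inversionParity (s i) (w * s j * w⁻¹) = 0 := by
    by_contra hne'
    have hlt := cs.length_mul_lt_of_inversionParity_eq_one (ZMod.eq_one_of_ne_zero hne')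
    rw [length_simple, Nat.lt_one_iff, length_eq_zero_iff, ← mul_assoc, ← mul_assoc,
      mul_inv_eq_one] at hlt
    exact hne (by rw [← mul_inv_eq_iff_eq_mul, inv_simple]; exact hlt)
  have hdesc : ℓ (s i * w * s j) < ℓ (s i * w) := by
    apply cs.length_mul_lt_of_inversionParity_eq_one
    rw [inversionParity_mul, hsj, hconj, add_zero]
  have h1 := cs.isLeftDescent_iff.1 hi
  have h2 := cs.isRightDescent_iff.1 hdesc
  omega

section TwistedIdentities

variable (θ : W ≃* W)

theorem length_map_le_of_forall_simple (hθS : ∀ i : B, ∃ j : B, θ (s i) = s j) (u : W) :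
    ℓ (θ u) ≤ ℓ u := by
  choose σ hσ using hθS
  obtain ⟨ω, hω, rfl⟩ := cs.exists_isReduced u
  have hmap : θ (π ω) = π (ω.map σ) := by
    rw [wordProd, map_list_prod, map_map, wordProd, map_map]
    exact congrArg _ (map_congr_left fun i _ => hσ i)
  calc ℓ (θ (π ω)) ≤ (ω.map σ).length := hmap ▸ cs.length_wordProd_le _
    _ = ℓ (π ω) := by rw [length_map, hω.eq]

theorem length_map_of_involutive (hθ2 : ∀ w : W, θ (θ w) = w)
    (hθS : ∀ i : B, ∃ j : B, θ (s i) = s j) (u : W) : ℓ (θ u) = ℓ u := by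
  refine (cs.length_map_le_of_forall_simple θ hθS u).antisymm ?_
  simpa [hθ2] using cs.length_map_le_of_forall_simple θ hθS (θ u)

theorem length_mul_map_inv_le (hθℓ : ∀ u : W, ℓ (θ u) = ℓ u) (x : W) :
    ℓ (x * θ x⁻¹) ≤ 2 * ℓ x := by
  have := cs.length_mul_le x (θ x⁻¹)
  rw [hθℓ, length_inv] at this
  omega

theorem not_isLeftInversion_of_mul_eq_mul_map (hθℓ : ∀ u : W, ℓ (θ u) = ℓ u) {w t : W}
    (hw : w ∈ twistedIdentities θ) (ht : cs.IsReflection t) (hcomm : t * w = w * θ t) :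
    ¬ cs.IsLeftInversion w t := by
  classical
  obtain ⟨x, rfl⟩ := hw
  set r := x⁻¹ * t * x with hr
  have hrefl : cs.IsReflection r := by simpa using ht.conj x⁻¹
  have hθr : θ r = r := by
    rw [hr, map_mul, map_mul, eq_inv_mul_of_mul_eq hcomm.symm]
    simp only [map_inv]
    group
  have hzero : cs.inversionParity (x * θ x⁻¹)⁻¹ t = 0 := by
    rw [map_inv, mul_inv_rev, inv_inv, inversionParity_mul,
      show t = x * r * x⁻¹ by rw [hr]; group, inversionParity_inv,
      show x⁻¹ * (x * r * x⁻¹) * x⁻¹⁻¹ = r by group,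
      cs.inversionParity_map_of_map_eq θ hθℓ hrefl hθr, CharTwo.add_self_eq_zero]
  rw [← isRightInversion_inv_iff]
  rintro ⟨-, hlt⟩
  rw [← cs.inversionParity_eq_one_iff ht, hzero] at hlt
  exact zero_ne_one hlt

theorem exists_length_simple_mul_mul_map_add_two (hθ2 : ∀ w : W, θ (θ w) = w)
    (hθS : ∀ i : B, ∃ j : B, θ (s i) = s j) {w : W} (hw : w ∈ twistedIdentities θ)
    (hw1 : w ≠ 1) : ∃ i : B, ℓ (s i * w * θ (s i)) + 2 = ℓ w := by
  have hθℓ := cs.length_map_of_involutive θ hθ2 hθS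
  obtain ⟨i, hi⟩ := cs.exists_leftDescent_of_ne_one hw1
  obtain ⟨j, hj⟩ := hθS i
  have hθw : θ w = w⁻¹ := by
    obtain ⟨x, rfl⟩ := hw
    simp [hθ2]
  have hright : cs.IsRightDescent w j := by
    rw [IsRightDescent, ← hj, ← hθℓ, map_mul, hθw, hθ2, ← length_inv, mul_inv_rev, inv_inv,
      inv_simple]
    exact hi
  have hne : s i * w ≠ w * θ (s i) := fun hcomm =>
    cs.not_isLeftInversion_of_mul_eq_mul_map θ hθℓ hw (cs.isReflection_simple i) hcomm
      ⟨cs.isReflection_simple i, hi⟩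
  refine ⟨i, ?_⟩
  rw [hj] at hne ⊢
  exact cs.length_simple_mul_mul_simple_add_two hi hright hne

end TwistedIdentities

end CoxeterSystem

/-- Every twisted identity `w ∈ ι(θ)` can be written as `w = x·θ(x⁻¹)` with
`ℓ(w) = 2·ℓ(x)`. -/
theorem stmt_1 {B W : Type*} [Group W] {M : CoxeterMatrix B}
    (cs : CoxeterSystem M W) (θ : W ≃* W)
    (hθ2 : ∀ w : W, θ (θ w) = w)
    (hθS : ∀ i : B, ∃ j : B, θ (cs.simple i) = cs.simple j)
    (w : W) (hw : w ∈ twistedIdentities θ) :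
    ∃ x : W, w = x * θ x⁻¹ ∧ cs.length w = 2 * cs.length x := by
  induction hn : cs.length w using Nat.strong_induction_on generalizing w with
  | _ n ih =>
  by_cases hw1 : w = 1
  · subst hw1
    exact ⟨1, by simp, by simp [← hn]⟩
  obtain ⟨i, hi⟩ := cs.exists_length_simple_mul_mul_map_add_two θ hθ2 hθS hw hw1
  have hw' : cs.simple i * w * θ (cs.simple i) ∈ twistedIdentities θ := by
    simpa using mul_mul_map_inv_mem_twistedIdentities θ hw (cs.simple i)
  obtain ⟨y, hy, hly⟩ := ih _ (by omega) _ hw' rfl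
  have hw_eq : w = cs.simple i * y * θ (cs.simple i * y)⁻¹ := by
    rw [mul_inv_rev, map_mul, ← mul_assoc, mul_assoc _ y, ← hy, cs.inv_simple]
    simp [mul_assoc, ← map_mul]
  have hle := cs.length_mul_map_inv_le θ (cs.length_map_of_involutive θ hθ2 hθS) (cs.simple i * y)
  have hge := cs.length_mul_le (cs.simple i) y
  rw [← hw_eq] at hle
  rw [cs.length_simple] at hge
  exact ⟨cs.simple i * y, hw_eq, by omega⟩
end

section
/- Let w ∈ 𝕴(θ) be a twisted involution with a reduced expression of the form s_1 s_2 ... s_{k-1} θ(s_1). Then the element v = s_2 ... s_{k-1} is also a twisted involution, and moreover neither s_1·v nor v·θ(s_1) is a twisted involution. -/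
/-- The set of twisted involutions `𝕴(θ) = {w ∈ W : θ(w) = w⁻¹}`. -/
def twistedInvolutions {W : Type*} [Group W] (θ : W ≃* W) : Set W :=
  {w : W | θ w = w⁻¹}

/-- If `w ∈ 𝕴(θ)` has a reduced expression of the form `s_1 s_2 ⋯ s_{k-1} θ(s_1)`,
then `v = s_2 ⋯ s_{k-1}` is also a twisted involution, while neither `s_1·v`
nor `v·θ(s_1)` is a twisted involution. -/
theorem stmt_3 {B W : Type*} [Group W] {M : CoxeterMatrix B}
    (cs : CoxeterSystem M W) (θ : W ≃* W)
    (hθ2 : ∀ w : W, θ (θ w) = w)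
    (hθS : ∀ i : B, ∃ j : B, θ (cs.simple i) = cs.simple j)
    (i j : B) (l : List B)
    (hj : θ (cs.simple i) = cs.simple j)
    (hred : cs.IsReduced (i :: l ++ [j]))
    (w : W) (hw : w = cs.wordProd (i :: l ++ [j]))
    (hinv : w ∈ twistedInvolutions θ) :
    cs.wordProd l ∈ twistedInvolutions θ ∧
      cs.simple i * cs.wordProd l ∉ twistedInvolutions θ ∧
      cs.wordProd l * θ (cs.simple i) ∉ twistedInvolutions θ := by
  set v := cs.wordProd l with hv
  have hsj : θ (cs.simple j) = cs.simple i := by rw [← hj, hθ2]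
  have hwv : w = cs.simple i * v * cs.simple j := by
    rw [hw, CoxeterSystem.wordProd_append, CoxeterSystem.wordProd_cons,
      CoxeterSystem.wordProd_singleton]
  -- v is a twisted involution
  have hθv : θ v = v⁻¹ := by
    have h : θ w = w⁻¹ := hinv
    rw [hwv] at h
    simp only [map_mul, hj, hsj, mul_inv_rev, cs.inv_simple, mul_assoc] at h
    have h1 := mul_left_cancel h
    exact mul_right_cancel h1
  -- key: w ≠ v by length considerations
  have hne : w ≠ v := by
    intro h
    have h1 : cs.length v ≤ l.length := cs.length_wordProd_le l
    have h2 : cs.length w = (i :: l ++ [j]).length := by rw [hw]; exact hred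
    simp at h2
    rw [h] at h2
    omega
  refine ⟨hθv, ?_, ?_⟩
  · intro h
    have h' : θ (cs.simple i * v) = (cs.simple i * v)⁻¹ := h
    simp only [map_mul, hj, hθv, mul_inv_rev, cs.inv_simple] at h'
    -- h' : s_j * v⁻¹ = v⁻¹ * s_i
    have hvs : cs.simple i * v = v * cs.simple j := by
      have := congrArg (·⁻¹) h'
      simpa [mul_inv_rev, cs.inv_simple] using this.symm
    apply hne
    rw [hwv, hvs, mul_assoc, cs.simple_mul_simple_self, mul_one]
  · intro h
    have h' : θ (v * θ (cs.simple i)) = (v * θ (cs.simple i))⁻¹ := h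
    rw [hj] at h'
    simp only [map_mul, hsj, hθv, mul_inv_rev, cs.inv_simple] at h'
    -- h' : v⁻¹ * s_i = s_j * v⁻¹
    have hvs : cs.simple i * v = v * cs.simple j := by
      have := congrArg (·⁻¹) h'
      simpa [mul_inv_rev, cs.inv_simple] using this
    apply hne
    rw [hwv, hvs, mul_assoc, cs.simple_mul_simple_self, mul_one]
end

section
/- Suppose w ∈ 𝕴(θ) is a nonidentity twisted involution such that no reduced expression s_1...s_k for w satisfies θ(s_1) = s_k. Then for any reduced expression s_1...s_k of w, one has ℓ(w·θ(s_1)) < ℓ(w) and w = s_2 ⋯ s_k · θ(s_1); consequently v = w·θ(s_1) = s_2⋯s_k is a twisted involution with ℓ(v) = ℓ(w) − 1. -/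
theorem mul_mul_inv_eq_iff_eq_inv_mul_mul {W : Type*} [Group W] (a x t : W) :
    a * x * a⁻¹ = t ↔ x = a⁻¹ * t * a := by
  constructor <;> rintro rfl <;> group

section TwistedInvolution

variable {W : Type*} [Group W] {θ : W ≃* W} {w : W}

theorem mul_apply_eq_inv_apply_inv_mul (hw : w ∈ twistedInvolutions θ) (x : W) :
    w * θ x = (θ (x⁻¹ * w))⁻¹ := by
  rw [map_mul, map_inv, show θ w = w⁻¹ from hw, mul_inv_rev, inv_inv, inv_inv]

theorem inv_mul_mem_twistedInvolutions (hw : w ∈ twistedInvolutions θ) {x : W}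
    (h : x⁻¹ * w = w * θ x) : x⁻¹ * w ∈ twistedInvolutions θ := by
  have h' := mul_apply_eq_inv_apply_inv_mul hw x
  rw [← h] at h'
  exact inv_eq_iff_eq_inv.mp h'.symm

end TwistedInvolution

namespace CoxeterSystem

variable {B W : Type*} [Group W] {M : CoxeterMatrix B} (cs : CoxeterSystem M W)

local prefix:100 "s" => cs.simple
local prefix:100 "π" => cs.wordProd
local prefix:100 "ℓ" => cs.length

section Exchange

open scoped Classical

theorem simple_mul_mul_simple_eq_iff (i : B) (x t : W) :
    s i * x * s i = t ↔ x = s i * t * s i := by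
  simpa only [inv_simple] using mul_mul_inv_eq_iff_eq_inv_mul_mul (s i) x t

/-- Tits' representation of `W` on `T × {±1}`, spread over all of `W × ZMod 2`. -/
noncomputable def simplePerm (i : B) : Equiv.Perm (W × ZMod 2) :=
  Function.Involutive.toPerm (fun x => (s i * x.1 * s i, x.2 + if x.1 = s i then 1 else 0)) <| by
    rintro ⟨x, c⟩
    simp only [simple_mul_mul_simple_eq_iff, ← mul_assoc, simple_mul_simple_self, one_mul,
      add_assoc, CharTwo.add_self_eq_zero, add_zero, Prod.mk.injEq, and_true]
    simp only [mul_assoc, simple_mul_simple_self, mul_one]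

@[simp] theorem simplePerm_apply (i : B) (x : W × ZMod 2) :
    cs.simplePerm i x = (s i * x.1 * s i, x.2 + if x.1 = s i then 1 else 0) := rfl

theorem simple_mul_pow_mul_simple (i j : B) (k : ℕ) :
    s j * (s i * s j) ^ k * s j = ((s i * s j) ^ k)⁻¹ := by
  have h : s j * (s i * s j) * (s j)⁻¹ = (s i * s j)⁻¹ := by
    simp only [mul_assoc, mul_inv_rev, inv_simple, simple_mul_simple_self, mul_one]
  rw [← inv_pow, ← h, conj_pow, inv_simple]

theorem simplePerm_mul_pow_apply (i j : B) (k : ℕ) (x : W × ZMod 2) :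
    ((cs.simplePerm i * cs.simplePerm j) ^ k) x =
      ((s i * s j) ^ k * x.1 * ((s i * s j) ^ k)⁻¹,
        x.2 + ∑ r ∈ Finset.range (2 * k), if x.1 = s j * (s i * s j) ^ r then 1 else 0) := by
  induction k with
  | zero => simp
  | succ k ih =>
    have hj : ((s i * s j) ^ k)⁻¹ * s j * (s i * s j) ^ k = s j * (s i * s j) ^ (2 * k) := by
      rw [← cs.simple_mul_pow_mul_simple]
      simp only [mul_assoc, simple_mul_simple_cancel_left, ← pow_add, two_mul]
    have hi : ((s i * s j) ^ k)⁻¹ * (s j * s i * s j) * (s i * s j) ^ k =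
        s j * (s i * s j) ^ (2 * k + 1) := by
      rw [← cs.simple_mul_pow_mul_simple, show 2 * k + 1 = k + (1 + k) by ring, pow_add, pow_add,
        pow_one]
      simp only [mul_assoc, simple_mul_simple_cancel_left]
    rw [pow_succ', Equiv.Perm.mul_apply, ih]
    refine Prod.ext ?_ ?_
    · simp only [Equiv.Perm.mul_apply, simplePerm_apply, pow_succ', mul_inv_rev, inv_simple,
        mul_assoc]
    · simp only [Equiv.Perm.mul_apply, simplePerm_apply, simple_mul_mul_simple_eq_iff,
        mul_mul_inv_eq_iff_eq_inv_mul_mul, hj, hi]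
      rw [show 2 * (k + 1) = 2 * k + 1 + 1 by ring, Finset.sum_range_succ, Finset.sum_range_succ]
      ring

theorem isLiftable_simplePerm : M.IsLiftable cs.simplePerm := by
  intro i j
  ext x : 1
  -- `r ↦ s j * (s i * s j) ^ r` has period `M i j`, so every term occurs twice.
  have hsum : ∑ r ∈ Finset.range (2 * M i j),
      (if x.1 = s j * (s i * s j) ^ r then 1 else 0 : ZMod 2) = 0 := by
    simp only [two_mul, Finset.sum_range_add, pow_add, simple_mul_simple_pow, one_mul,
      CharTwo.add_self_eq_zero]
  rw [simplePerm_mul_pow_apply, hsum, simple_mul_simple_pow]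
  simp

noncomputable def reflectionAction : W →* Equiv.Perm (W × ZMod 2) :=
  cs.lift ⟨cs.simplePerm, cs.isLiftable_simplePerm⟩

theorem reflectionAction_wordProd (ω : List B) (x : W × ZMod 2) :
    cs.reflectionAction (π ω) x =
      (π ω * x.1 * (π ω)⁻¹, x.2 + ((cs.rightInvSeq ω).count x.1 : ZMod 2)) := by
  induction ω generalizing x with
  | nil => simp
  | cons i ω ih =>
    rw [wordProd_cons, map_mul, Equiv.Perm.mul_apply, ih, reflectionAction,
      lift_apply_simple, simplePerm_apply]
    refine Prod.ext ?_ ?_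
    · simp only [mul_inv_rev, inv_simple, mul_assoc]
    · simp only [rightInvSeq, List.count_cons, mul_mul_inv_eq_iff_eq_inv_mul_mul, beq_iff_eq,
        eq_comm (a := x.1)]
      push_cast
      ring

theorem count_rightInvSeq_eq_of_wordProd_eq {ω ω' : List B} (h : π ω = π ω') (t : W) :
    ((cs.rightInvSeq ω).count t : ZMod 2) = (cs.rightInvSeq ω').count t := by
  have h' := congrArg Prod.snd (cs.reflectionAction_wordProd ω (t, 0))
  rw [h, reflectionAction_wordProd] at h'
  simpa using h'.symm

theorem simple_mem_rightInvSeq_of_length_mul_simple_lt {ω : List B} {j : B}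
    (h : ℓ (π ω * s j) < ℓ (π ω)) : s j ∈ cs.rightInvSeq ω := by
  by_contra hω
  obtain ⟨α, hα, hαω⟩ := cs.exists_isReduced (π ω * s j)
  have hprod : π (α.concat j) = π ω := by
    rw [wordProd_concat, ← hαω, simple_mul_simple_cancel_right]
  have hconj : ((cs.rightInvSeq α).map (MulAut.conj (s j))).count (s j) =
      (cs.rightInvSeq α).count (s j) := by
    simpa [inv_simple, mul_assoc] using
      List.count_map_of_injective _ _ (MulAut.conj (s j)).injective (s j)
  have hcount := cs.count_rightInvSeq_eq_of_wordProd_eq hprod (s j)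
  rw [rightInvSeq_concat, List.concat_eq_append, List.count_append, hconj,
    List.count_eq_zero_of_not_mem hω] at hcount
  have hmem : s j ∈ cs.rightInvSeq α := by
    by_contra hα'
    simp [List.count_eq_zero_of_not_mem hα'] at hcount
  have hlt := (cs.isRightInversion_of_mem_rightInvSeq hα hmem).2
  rw [← hαω, simple_mul_simple_cancel_right] at hlt
  omega

theorem exists_wordProd_eraseIdx_eq_mul_simple {ω : List B} {j : B}
    (h : ℓ (π ω * s j) < ℓ (π ω)) : ∃ n < ω.length, π (ω.eraseIdx n) = π ω * s j := by
  obtain ⟨n, hn, hget⟩ :=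
    List.mem_iff_getElem.mp (cs.simple_mem_rightInvSeq_of_length_mul_simple_lt h)
  refine ⟨n, by simpa using hn, ?_⟩
  rw [← wordProd_mul_getD_rightInvSeq, List.getD_eq_getElem _ _ hn, hget]

end Exchange

theorem map_wordProd {B' W' : Type*} [Group W'] {M' : CoxeterMatrix B'}
    (cs' : CoxeterSystem M' W') (f : W →* W') (g : B → B')
    (hg : ∀ i, f (s i) = cs'.simple (g i)) (ω : List B) :
    f (π ω) = cs'.wordProd (ω.map g) := by
  induction ω with
  | nil => simp
  | cons i ω ih => rw [wordProd_cons, map_mul, hg, ih, List.map_cons, wordProd_cons]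

theorem length_map_le {B' W' : Type*} [Group W'] {M' : CoxeterMatrix B'}
    (cs' : CoxeterSystem M' W') {f : W →* W'} (hf : ∀ i, ∃ j, f (s i) = cs'.simple j) (w : W) :
    cs'.length (f w) ≤ ℓ w := by
  choose g hg using hf
  obtain ⟨ω, hω, rfl⟩ := cs.exists_isReduced w
  rw [cs.map_wordProd cs' f g hg, hω.eq]
  simpa using cs'.length_wordProd_le (ω.map g)

theorem length_apply_of_involutive {θ : W ≃* W} (hθ : ∀ w, θ (θ w) = w)
    (hθS : ∀ i, ∃ j, θ (s i) = s j) (w : W) : ℓ (θ w) = ℓ w :=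
  le_antisymm (cs.length_map_le cs (f := θ.toMonoidHom) hθS w)
    (by simpa [hθ] using cs.length_map_le cs (f := θ.toMonoidHom) hθS (θ w))

theorem length_mul_apply_eq_length_inv_mul {θ : W ≃* W} (hθ : ∀ w, θ (θ w) = w)
    (hθS : ∀ i, ∃ j, θ (s i) = s j) {w : W} (hw : w ∈ twistedInvolutions θ) (x : W) :
    ℓ (w * θ x) = ℓ (x⁻¹ * w) := by
  rw [mul_apply_eq_inv_apply_inv_mul hw, length_inv, cs.length_apply_of_involutive hθ hθS]

theorem IsReduced.wordProd_cons_mul_simple_eq_or {i j : B} {l : List B}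
    (hred : cs.IsReduced (i :: l)) (h : ℓ (π (i :: l) * s j) < ℓ (π (i :: l))) :
    π (i :: l) * s j = π l ∨
      ∃ l', cs.IsReduced (i :: l' ++ [j]) ∧ π (i :: l' ++ [j]) = π (i :: l) := by
  obtain ⟨n, hn, he⟩ := cs.exists_wordProd_eraseIdx_eq_mul_simple h
  cases n with
  | zero => exact Or.inl (by simpa using he.symm)
  | succ m =>
    have hprod : π (i :: l.eraseIdx m ++ [j]) = π (i :: l) := by
      rw [wordProd_append, wordProd_singleton, ← List.eraseIdx_cons_succ, he, mul_assoc,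
        simple_mul_simple_self, mul_one]
    refine Or.inr ⟨l.eraseIdx m, ?_, hprod⟩
    rw [IsReduced, hprod, hred.eq]
    simp only [List.length_cons, List.length_append, List.length_eraseIdx, List.length_nil]
      at hn ⊢
    split_ifs <;> omega

end CoxeterSystem

open CoxeterSystem

theorem stmt_4_general {B W : Type*} [Group W] {M : CoxeterMatrix B}
    (cs : CoxeterSystem M W) (θ : W ≃* W)
    (hθ2 : ∀ w : W, θ (θ w) = w)
    (hθS : ∀ i : B, ∃ j : B, θ (cs.simple i) = cs.simple j)
    (w : W) (hw : w ∈ twistedInvolutions θ)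
    (hno : ¬ ∃ (i : B) (l : List B) (j : B), cs.IsReduced (i :: l ++ [j]) ∧
      cs.wordProd (i :: l ++ [j]) = w ∧ θ (cs.simple i) = cs.simple j)
    (i : B) (l : List B)
    (hred : cs.IsReduced (i :: l)) (hprod : cs.wordProd (i :: l) = w) :
    cs.length (w * θ (cs.simple i)) < cs.length w ∧
      w = cs.wordProd l * θ (cs.simple i) ∧
      w * θ (cs.simple i) ∈ twistedInvolutions θ ∧
      w * θ (cs.simple i) = cs.wordProd l ∧
      cs.length (w * θ (cs.simple i)) = cs.length w - 1 := by
  obtain ⟨j, hj⟩ := hθS i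
  have hinv : (cs.simple i)⁻¹ * w = cs.wordProd l := by
    rw [← hprod, wordProd_cons, inv_mul_cancel_left]
  have hlen : cs.length (w * θ (cs.simple i)) = cs.length w - 1 := by
    have hl : cs.IsReduced l := hred.drop 1
    rw [cs.length_mul_apply_eq_length_inv_mul hθ2 hθS hw, hinv, ← hprod, hred.eq, hl.eq]
    simp
  have hlt : cs.length (w * θ (cs.simple i)) < cs.length w := by
    rw [hlen, ← hprod, hred.eq]
    simp
  have htail : w * θ (cs.simple i) = cs.wordProd l := by
    rw [hj, ← hprod] at hlt ⊢
    refine (hred.wordProd_cons_mul_simple_eq_or cs hlt).resolve_right ?_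
    rintro ⟨l', hl', he⟩
    exact hno ⟨i, l', j, hl', he.trans hprod, hj⟩
  refine ⟨hlt, ?_, ?_, htail, hlen⟩
  · rw [← htail, hj, mul_assoc, simple_mul_simple_self, mul_one]
  · rw [htail, ← hinv]
    exact inv_mul_mem_twistedInvolutions hw (hinv.trans htail.symm)

/-- Suppose `w ∈ 𝕴(θ)` is a nonidentity twisted involution such that no reduced
expression `s_1 ⋯ s_k` for `w` satisfies `θ(s_1) = s_k`.  Then for any reduced
expression `s_1 ⋯ s_k` of `w` one has `ℓ(w·θ(s_1)) < ℓ(w)` and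
`w = s_2 ⋯ s_k · θ(s_1)`; consequently `v = w·θ(s_1) = s_2 ⋯ s_k` is a twisted
involution with `ℓ(v) = ℓ(w) − 1`. -/
theorem stmt_4 {B W : Type*} [Group W] {M : CoxeterMatrix B}
    (cs : CoxeterSystem M W) (θ : W ≃* W)
    (hθ2 : ∀ w : W, θ (θ w) = w)
    (hθS : ∀ i : B, ∃ j : B, θ (cs.simple i) = cs.simple j)
    (w : W) (hw : w ∈ twistedInvolutions θ) (hne : w ≠ 1)
    (hno : ¬ ∃ (i : B) (l : List B) (j : B), cs.IsReduced (i :: l ++ [j]) ∧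
      cs.wordProd (i :: l ++ [j]) = w ∧ θ (cs.simple i) = cs.simple j)
    (i : B) (l : List B)
    (hred : cs.IsReduced (i :: l)) (hprod : cs.wordProd (i :: l) = w) :
    cs.length (w * θ (cs.simple i)) < cs.length w ∧
      w = cs.wordProd l * θ (cs.simple i) ∧
      w * θ (cs.simple i) ∈ twistedInvolutions θ ∧
      w * θ (cs.simple i) = cs.wordProd l ∧
      cs.length (w * θ (cs.simple i)) = cs.length w - 1 :=
  stmt_4_general cs θ hθ2 hθS w hw hno i l hred hprod
end

section
/- Let P be the weak (right) order on a Coxeter group W and let G be a group of S-preserving automorphisms of W. Then the injective homomorphism φ : W̃ → W of Steinberg (sending each generator s̃_J of the fixed-subgroup Coxeter system to the longest element w_0(J) of W_J) is an order-isomorphism from the weak order on W̃ onto the subposet of the weak order on W induced by the fixed subgroup W^G. -/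
/-!
A reduced product `x * y` in `W̃` concatenates reduced words, so by Crisp's lemma its image is
again a reduced product: this is the easy direction. Conversely, `w ↦ ℓ(φ w)` is subadditive,
additive on reduced products of `W̃` and positive on its simple reflections. Write `x = s x'`
with `s` simple and `ℓ(x) = ℓ(x') + 1`; if this function is additive on `x * y`, the triangle
inequalities through `s · (x' y)` force it to be additive on `s · x'y` and on `x' · y`. The
first can only happen when `ℓ(s x' y) = ℓ(x' y) + 1`, and induction on `ℓ(x)` handles the
second.
-/

def WeakLE {B W : Type*} [Group W] {M : CoxeterMatrix B}
    (cs : CoxeterSystem M W) (u v : W) : Prop :=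
  cs.length u + cs.length (u⁻¹ * v) = cs.length v

namespace CoxeterSystem

section

variable {B W : Type*} [Group W] {M : CoxeterMatrix B} (cs : CoxeterSystem M W)

theorem isReduced_append {ω ω' : List B} (hω : cs.IsReduced ω) (hω' : cs.IsReduced ω')
    (h : cs.length (cs.wordProd ω) + cs.length (cs.wordProd ω') =
      cs.length (cs.wordProd ω * cs.wordProd ω')) :
    cs.IsReduced (ω ++ ω') := by
  rw [IsReduced, wordProd_append, ← h, hω.eq, hω'.eq, List.length_append]

/- If `s y` were shorter than `y`, then `y = s (s y)` would be a reduced product, forcing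
`f y = f s + f (s y) > f (s y)`. -/
theorem length_simple_mul_of_add_eq {f : W → ℕ}
    (hadd : ∀ x y, cs.length x + cs.length y = cs.length (x * y) → f x + f y = f (x * y))
    (hpos : ∀ i, 1 ≤ f (cs.simple i)) {i : B} {y : W}
    (h : f (cs.simple i) + f y = f (cs.simple i * y)) :
    cs.length (cs.simple i * y) = cs.length y + 1 := by
  refine (cs.length_simple_mul y i).resolve_right fun hlt => ?_
  have hred : cs.length (cs.simple i) + cs.length (cs.simple i * y) =
      cs.length (cs.simple i * (cs.simple i * y)) := by
    rw [← mul_assoc, simple_mul_simple_self, one_mul, length_simple]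
    omega
  have hf := hadd _ _ hred
  rw [← mul_assoc, simple_mul_simple_self, one_mul] at hf
  have := hpos i
  omega

theorem length_add_length_eq_of_add_eq {f : W → ℕ} (hsub : ∀ x y, f (x * y) ≤ f x + f y)
    (hadd : ∀ x y, cs.length x + cs.length y = cs.length (x * y) → f x + f y = f (x * y))
    (hpos : ∀ i, 1 ≤ f (cs.simple i)) {x y : W} (h : f x + f y = f (x * y)) :
    cs.length x + cs.length y = cs.length (x * y) := by
  obtain ⟨ω, hω, rfl⟩ := cs.exists_isReduced x
  induction ω generalizing y with
  | nil => simp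
  | cons i ω ih =>
    have hω' : cs.IsReduced ω := by simpa using hω.drop 1
    have hx : cs.wordProd (i :: ω) = cs.simple i * cs.wordProd ω := cs.wordProd_cons i ω
    rw [hx, mul_assoc] at h ⊢
    have hfx : f (cs.simple i) + f (cs.wordProd ω) = f (cs.simple i * cs.wordProd ω) := by
      refine hadd _ _ ?_
      rw [← hx, hω.eq, hω'.eq, length_simple, List.length_cons, add_comm]
    have h₁ := hsub (cs.simple i) (cs.wordProd ω * y)
    have h₂ := hsub (cs.wordProd ω) y
    have hlen :
        cs.length (cs.simple i * (cs.wordProd ω * y)) = cs.length (cs.wordProd ω * y) + 1 :=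
      cs.length_simple_mul_of_add_eq hadd hpos (by omega)
    have := ih (y := y) hω' (by omega)
    rw [← hx, hω.eq, List.length_cons, hlen, ← this, hω'.eq]
    ring

end

section

variable {B B' W W' : Type*} [Group W] [Group W'] {M : CoxeterMatrix B} {M' : CoxeterMatrix B'}
  {cs : CoxeterSystem M W} {cs' : CoxeterSystem M' W'}

theorem length_map_add_length_map_eq {φ : W' →* W}
    (hφ : ∀ ω : List B', cs'.IsReduced ω →
      cs.length (φ (cs'.wordProd ω)) = (ω.map fun b => cs.length (φ (cs'.simple b))).sum)
    {x y : W'} (h : cs'.length x + cs'.length y = cs'.length (x * y)) :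
    cs.length (φ x) + cs.length (φ y) = cs.length (φ (x * y)) := by
  obtain ⟨ωx, hx, rfl⟩ := cs'.exists_isReduced x
  obtain ⟨ωy, hy, rfl⟩ := cs'.exists_isReduced y
  rw [← cs'.wordProd_append, hφ _ hx, hφ _ hy, hφ _ (cs'.isReduced_append hx hy h),
    List.map_append, List.sum_append]

theorem one_le_length_map_simple {φ : W' →* W} (hφ : Function.Injective φ) (b : B') :
    1 ≤ cs.length (φ (cs'.simple b)) := by
  rw [Nat.one_le_iff_ne_zero, Ne, cs.length_eq_zero_iff, ← map_one φ, hφ.eq_iff]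
  exact fun h => by simpa [h] using cs'.length_simple b

theorem length_add_length_eq_iff_map {φ : W' →* W} (hinj : Function.Injective φ)
    (hφ : ∀ ω : List B', cs'.IsReduced ω →
      cs.length (φ (cs'.wordProd ω)) = (ω.map fun b => cs.length (φ (cs'.simple b))).sum)
    {x y : W'} :
    cs'.length x + cs'.length y = cs'.length (x * y) ↔
      cs.length (φ x) + cs.length (φ y) = cs.length (φ (x * y)) :=
  ⟨length_map_add_length_map_eq hφ,
    cs'.length_add_length_eq_of_add_eq (f := fun w => cs.length (φ w))
      (fun x y => by simpa only [map_mul] using cs.length_mul_le (φ x) (φ y))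
      (fun _ _ => length_map_add_length_map_eq hφ) (one_le_length_map_simple hinj)⟩

end

end CoxeterSystem

theorem stmt_9_general {B B' W W' : Type*} [Group W] [Group W']
    {M : CoxeterMatrix B} {M' : CoxeterMatrix B'}
    (cs : CoxeterSystem M W) (cs' : CoxeterSystem M' W')
    (φ : W' →* W) (hinj : Function.Injective φ)
    (hCrisp : ∀ ω : List B', cs'.IsReduced ω →
      cs.length (φ (cs'.wordProd ω)) =
        (ω.map fun b => cs.length (φ (cs'.simple b))).sum) :
    ∀ u v : W', WeakLE cs' u v ↔ WeakLE cs (φ u) (φ v) := by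
  intro u v
  simpa only [WeakLE, mul_inv_cancel_left, map_mul, map_inv] using
    CoxeterSystem.length_add_length_eq_iff_map hinj hCrisp (x := u) (y := u⁻¹ * v)

/-- The Steinberg embedding `φ : W̃ → W` of the fixed subgroup `W^G` (sending
each generator of the Coxeter system `(W̃, S̃)` to the longest element of the
finite parabolic subgroup on a `G`-orbit) is an order-isomorphism from the weak
order on `W̃` onto the subposet of the weak order on `W` induced by `W^G`. -/
theorem stmt_9 {B B' W W' G : Type*} [Group W] [Group W'] [Group G]
    {M : CoxeterMatrix B} {M' : CoxeterMatrix B'}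
    (cs : CoxeterSystem M W) (cs' : CoxeterSystem M' W')
    (ρ : G →* MulAut W)
    (hρS : ∀ g : G, ∀ i : B, ∃ j : B, ρ g (cs.simple i) = cs.simple j)
    (φ : W' →* W) (hinj : Function.Injective φ)
    (hrange : Set.range φ = {w : W | ∀ g : G, ρ g w = w})
    (hgen : ∀ b : B', ∃ J : Set B,
      (∀ g : G, ∀ i ∈ J, ∃ j ∈ J, ρ g (cs.simple i) = cs.simple j) ∧
      φ (cs'.simple b) ∈ Subgroup.closure (cs.simple '' J) ∧
      ∀ v ∈ Subgroup.closure (cs.simple '' J),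
        cs.length v ≤ cs.length (φ (cs'.simple b)))
    (hCrisp : ∀ ω : List B', cs'.IsReduced ω →
      cs.length (φ (cs'.wordProd ω)) =
        (ω.map fun b => cs.length (φ (cs'.simple b))).sum) :
    ∀ u v : W', WeakLE cs' u v ↔ WeakLE cs (φ u) (φ v) :=
  stmt_9_general cs cs' φ hinj hCrisp
end

section
/- Let (W,S) be a Coxeter system and φ : W̃ → W the Steinberg embedding of the fixed subgroup of a group G of S-preserving automorphisms. Then for every generator s̃ ∈ S̃ and every w ∈ W^G, ℓ(φ(s̃)·w) = ℓ(w) + ℓ(φ(s̃)) or ℓ(φ(s̃)·w) = ℓ(w) − ℓ(φ(s̃)). -/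
/-- For the Steinberg embedding `φ : W̃ → W` of the fixed subgroup `W^G`, every
generator `s̃ ∈ S̃` and every `w ∈ W^G` satisfy
`ℓ(φ(s̃)·w) = ℓ(w) + ℓ(φ(s̃))` or `ℓ(φ(s̃)·w) = ℓ(w) − ℓ(φ(s̃))`. -/
theorem stmt_10 {B B' W W' G : Type*} [Group W] [Group W'] [Group G]
    {M : CoxeterMatrix B} {M' : CoxeterMatrix B'}
    (cs : CoxeterSystem M W) (cs' : CoxeterSystem M' W')
    (ρ : G →* MulAut W)
    (hρS : ∀ g : G, ∀ i : B, ∃ j : B, ρ g (cs.simple i) = cs.simple j)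
    (φ : W' →* W) (hinj : Function.Injective φ)
    (hrange : Set.range φ = {w : W | ∀ g : G, ρ g w = w})
    (hgen : ∀ b : B', ∃ J : Set B,
      (∀ g : G, ∀ i ∈ J, ∃ j ∈ J, ρ g (cs.simple i) = cs.simple j) ∧
      φ (cs'.simple b) ∈ Subgroup.closure (cs.simple '' J) ∧
      ∀ v ∈ Subgroup.closure (cs.simple '' J),
        cs.length v ≤ cs.length (φ (cs'.simple b)))
    (hCrisp : ∀ ω : List B', cs'.IsReduced ω →
      cs.length (φ (cs'.wordProd ω)) =
        (ω.map fun b => cs.length (φ (cs'.simple b))).sum) :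
    ∀ (b : B') (w : W), (∀ g : G, ρ g w = w) →
      cs.length (φ (cs'.simple b) * w) =
          cs.length w + cs.length (φ (cs'.simple b)) ∨
        cs.length (φ (cs'.simple b) * w) + cs.length (φ (cs'.simple b)) =
          cs.length w := by
  intro b w hw
  have hwmem : w ∈ Set.range φ := by rw [hrange]; exact hw
  obtain ⟨w', rfl⟩ := hwmem
  rcases cs'.length_simple_mul w' b with hup | hdown
  · -- ℓ'(s b * w') = ℓ'(w') + 1
    left
    obtain ⟨ω, hred, hw'⟩ := cs'.exists_reduced_word' w'
    have hred2 : cs'.IsReduced (b :: ω) := by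
      unfold CoxeterSystem.IsReduced at hred ⊢
      rw [cs'.wordProd_cons, ← hw', hup, hw', hred]
      simp
    have h1 := hCrisp ω hred
    have h2 := hCrisp (b :: ω) hred2
    rw [cs'.wordProd_cons, ← hw'] at h2
    rw [← map_mul, h2, hw', h1]
    simp [Nat.add_comm]
  · -- ℓ'(s b * w') + 1 = ℓ'(w')
    right
    set u := cs'.simple b * w' with hu
    obtain ⟨τ, hred, huτ⟩ := cs'.exists_reduced_word' u
    have hred2 : cs'.IsReduced (b :: τ) := by
      unfold CoxeterSystem.IsReduced at hred ⊢
      rw [cs'.wordProd_cons, ← huτ]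
      have : cs'.simple b * u = w' := by
        rw [hu, ← mul_assoc, cs'.simple_mul_simple_self, one_mul]
      rw [this, ← hdown, huτ, hred]
      simp
    have h1 := hCrisp τ hred
    have h2 := hCrisp (b :: τ) hred2
    rw [cs'.wordProd_cons, ← huτ] at h2
    have hs : cs'.simple b * u = w' := by
      rw [hu, ← mul_assoc, cs'.simple_mul_simple_self, one_mul]
    rw [hs] at h2
    rw [← map_mul, ← hu, huτ, h1, h2]
    simp [Nat.add_comm]
end

section
/- Let P be a bounded finite poset in which every interval is graded and is a Z/2-homology sphere of top dimension (i.e., its proper part's order complex has the reduced homology of a sphere of dimension equal to the interval's length minus 2). Then the order complex of the proper part of P is a pseudomanifold: it is pure, every codimension-1 face lies in exactly two facets, and it is strongly connected. -/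
/-- The mod-2 boundary of a set `D` of faces: the set of `m`-element subsets
contained in an odd number of members of `D`.  (Over `ℤ/2`, a simplicial chain
is identified with its set of faces; for `m = 0` the face `∅` is included,
which yields *reduced* homology via the augmentation.) -/
def mod2Bdry {V : Type*} [DecidableEq V] (D : Finset (Finset V)) (m : ℕ) :
    Finset (Finset V) :=
  (D.biUnion fun f => f.powersetCard m).filter
    fun t => ¬ Even ((D.filter fun f => t ⊆ f).card)

open scoped Classical in
/-- The order complex of the open interval `(p,q)` of a finite poset: its
faces are the nonempty chains lying strictly between `p` and `q`. -/
noncomputable def intervalComplex {P : Type*} [PartialOrder P] [Fintype P]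
    [DecidableEq P] (p q : P) : Finset (Finset P) :=
  Finset.univ.filter fun s : Finset P =>
    s.Nonempty ∧ (∀ a ∈ s, p < a ∧ a < q) ∧ ∀ a ∈ s, ∀ b ∈ s, a ≤ b ∨ b ≤ a

set_option linter.unusedSectionVars false

section
variable {P : Type*} [PartialOrder P] [Fintype P] [DecidableEq P]

lemma mem_intervalComplex {p q : P} {s : Finset P} :
    s ∈ intervalComplex p q ↔
      s.Nonempty ∧ (∀ a ∈ s, p < a ∧ a < q) ∧ ∀ a ∈ s, ∀ b ∈ s, a ≤ b ∨ b ≤ a := by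
  classical
  simp [intervalComplex]

lemma exists_cov_le {a b : P} (h : a < b) : ∃ c, a ⋖ c ∧ c ≤ b := by
  classical
  letI : LocallyFiniteOrder P := Fintype.toLocallyFiniteOrder
  exact exists_covBy_le_of_lt h

variable {ρ : P → ℕ}

lemma rankLt (hcov : ∀ a b : P, a ⋖ b → ρ b = ρ a + 1) :
    ∀ a b : P, a < b → ρ a < ρ b := by
  intro a
  induction a using WellFoundedGT.induction with
  | _ a IH =>
    intro b hab
    obtain ⟨c, hc, hcb⟩ := exists_cov_le hab
    have h1 := hcov a c hc
    rcases eq_or_lt_of_le hcb with rfl | hlt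
    · omega
    · have := IH c hc.lt b hlt
      omega

lemma rankLe (hcov : ∀ a b : P, a ⋖ b → ρ b = ρ a + 1) :
    ∀ a b : P, a ≤ b → ρ a ≤ ρ b := by
  intro a b hab
  rcases eq_or_lt_of_le hab with rfl | h
  · exact le_refl _
  · exact (rankLt hcov a b h).le

variable [BoundedOrder P]

/-- A (possibly empty) chain in the open interval `(⊥, ⊤)`. -/
def IsOC (s : Finset P) : Prop :=
  (∀ a ∈ s, (⊥ : P) < a ∧ a < ⊤) ∧ ∀ a ∈ s, ∀ b ∈ s, a ≤ b ∨ b ≤ a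

lemma isOC_subset {s t : Finset P} (h : t ⊆ s) (hs : IsOC s) : IsOC t :=
  ⟨fun a ha => hs.1 a (h ha), fun a ha b hb => hs.2 a (h ha) b (h hb)⟩

lemma mem_iC {s : Finset P} :
    s ∈ intervalComplex (⊥ : P) (⊤ : P) ↔ s.Nonempty ∧ IsOC s := by
  rw [mem_intervalComplex]; exact ⟨fun ⟨h1, h2, h3⟩ => ⟨h1, h2, h3⟩,
    fun ⟨h1, h2, h3⟩ => ⟨h1, h2, h3⟩⟩

lemma hatcomp {s : Finset P} (hs : IsOC s) :
    ∀ x ∈ insert (⊥ : P) (insert ⊤ s), ∀ y ∈ insert (⊥ : P) (insert ⊤ s),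
      x ≤ y ∨ y ≤ x := by
  intro x hx y hy
  simp only [Finset.mem_insert] at hx hy
  rcases hx with rfl | rfl | hx
  · exact Or.inl bot_le
  · exact Or.inr le_top
  · rcases hy with rfl | rfl | hy
    · exact Or.inr bot_le
    · exact Or.inl le_top
    · exact hs.2 x hx y hy

lemma gap (hcov : ∀ a b : P, a ⋖ b → ρ b = ρ a + 1)
    {s : Finset P} (hs : IsOC s) {r : ℕ}
    (hr : ∀ e ∈ s, ρ e ≠ r) (h0 : ρ (⊥ : P) < r) (hrt : r < ρ (⊤ : P)) :
    ∃ a b : P, a < b ∧ ρ a < r ∧ r < ρ b ∧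
      (∀ e ∈ s, ρ e < r → e ≤ a) ∧ (∀ e ∈ s, r < ρ e → b ≤ e) ∧
      (a = ⊥ ∨ a ∈ s) ∧ (b = ⊤ ∨ b ∈ s) := by
  classical
  set A := (insert (⊥ : P) s).filter (fun e => ρ e < r) with hA
  have hbA : (⊥ : P) ∈ A := by simp [hA, h0]
  obtain ⟨a, haA, hamax⟩ := A.exists_max_image ρ ⟨⊥, hbA⟩
  set B := (insert (⊤ : P) s).filter (fun e => r < ρ e) with hB
  have htB : (⊤ : P) ∈ B := by simp [hB, hrt]
  obtain ⟨b, hbB, hbmin⟩ := B.exists_min_image ρ ⟨⊤, htB⟩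
  simp only [hA, hB, Finset.mem_filter, Finset.mem_insert] at haA hbB
  have hamem : a = ⊥ ∨ a ∈ s := haA.1
  have hbmem : b = ⊤ ∨ b ∈ s := hbB.1
  have hcomp := hatcomp hs
  have hmem : ∀ c : P, (c = ⊥ ∨ c ∈ s) ∨ (c = ⊤ ∨ c ∈ s) →
      c ∈ insert (⊥ : P) (insert ⊤ s) := by
    intro c hc
    simp only [Finset.mem_insert]
    tauto
  have haM := hmem a (Or.inl hamem)
  have hbM := hmem b (Or.inr hbmem)
  have hab : a < b := by
    have hne : ρ a < ρ b := lt_trans haA.2 hbB.2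
    rcases hcomp a haM b hbM with h | h
    · exact lt_of_le_of_ne h (fun heq => by rw [heq] at hne; omega)
    · exact absurd (rankLe hcov b a h) (by omega)
  refine ⟨a, b, hab, haA.2, hbB.2, ?_, ?_, hamem, hbmem⟩
  · intro e he her
    have heA : e ∈ A := by simp [hA, he, her]
    have hle := hamax e heA
    have heM := hmem e (Or.inl (Or.inr he))
    rcases hcomp e heM a haM with h | h
    · exact h
    · rcases eq_or_lt_of_le h with rfl | h'
      · exact le_refl _
      · exact absurd (rankLt hcov a e h') (by omega)
  · intro e he her
    have heB : e ∈ B := by simp [hB, he, her]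
    have hle := hbmin e heB
    have heM := hmem e (Or.inl (Or.inr he))
    rcases hcomp b hbM e heM with h | h
    · exact h
    · rcases eq_or_lt_of_le h with rfl | h'
      · exact le_refl _
      · exact absurd (rankLt hcov e b h') (by omega)

lemma gap_insert (hcov : ∀ a b : P, a ⋖ b → ρ b = ρ a + 1)
    {s : Finset P} (hs : IsOC s) {r : ℕ}
    (hr : ∀ e ∈ s, ρ e ≠ r) {a b : P}
    (hlo : ∀ e ∈ s, ρ e < r → e ≤ a) (hhi : ∀ e ∈ s, r < ρ e → b ≤ e)
    (ha : a = ⊥ ∨ a ∈ s) (hb : b = ⊤ ∨ b ∈ s)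
    {x : P} (hax : a < x) (hxb : x < b) :
    x ∉ s ∧ IsOC (insert x s) := by
  have hside : ∀ e ∈ s, e ≤ a ∨ b ≤ e := by
    intro e he
    rcases lt_trichotomy (ρ e) r with h | h | h
    · exact Or.inl (hlo e he h)
    · exact absurd h (hr e he)
    · exact Or.inr (hhi e he h)
  have hxs : x ∉ s := by
    intro hx
    rcases hside x hx with h | h
    · exact absurd (lt_of_lt_of_le hax h) (lt_irrefl _)
    · exact absurd (lt_of_lt_of_le hxb h) (lt_irrefl _)
  have hbotx : (⊥ : P) < x := by
    rcases ha with rfl | ha'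
    · exact hax
    · exact lt_trans (hs.1 a ha').1 hax
  have hxtop : x < (⊤ : P) := by
    rcases hb with rfl | hb'
    · exact hxb
    · exact lt_trans hxb (hs.1 b hb').2
  have hcmp : ∀ e ∈ s, x ≤ e ∨ e ≤ x := by
    intro e he
    rcases hside e he with h | h
    · exact Or.inr (le_trans h hax.le)
    · exact Or.inl (le_trans hxb.le h)
  refine ⟨hxs, ⟨?_, ?_⟩⟩
  · intro c hc
    rcases Finset.mem_insert.mp hc with rfl | hc'
    · exact ⟨hbotx, hxtop⟩
    · exact hs.1 c hc'
  · intro c hc d hd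
    rcases Finset.mem_insert.mp hc with rfl | hc' <;>
      rcases Finset.mem_insert.mp hd with rfl | hd'
    · exact Or.inl (le_refl _)
    · exact hcmp d hd'
    · exact (hcmp c hc').symm
    · exact hs.2 c hc' d hd'

lemma oc_card_le (hbot : ρ (⊥ : P) = 0) (hcov : ∀ a b : P, a ⋖ b → ρ b = ρ a + 1)
    {s : Finset P} (hs : IsOC s) : s.card ≤ ρ (⊤ : P) - 1 := by
  classical
  have hinj : Set.InjOn ρ ↑s := by
    intro e he e' he' hee
    rcases hs.2 e he e' he' with h | h
    · rcases eq_or_lt_of_le h with h' | h'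
      · exact h'
      · exact absurd (rankLt hcov _ _ h') (by omega)
    · rcases eq_or_lt_of_le h with h' | h'
      · exact h'.symm
      · exact absurd (rankLt hcov _ _ h') (by omega)
  have hsub : s.image ρ ⊆ Finset.Ioo 0 (ρ (⊤ : P)) := by
    intro n hn
    obtain ⟨e, he, rfl⟩ := Finset.mem_image.mp hn
    have h1 := rankLt hcov ⊥ e (hs.1 e he).1
    have h2 := rankLt hcov e ⊤ (hs.1 e he).2
    rw [hbot] at h1
    exact Finset.mem_Ioo.mpr ⟨h1, h2⟩
  have := Finset.card_le_card hsub
  rw [Finset.card_image_of_injOn hinj] at this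
  simpa using this

lemma oc_extend (hbot : ρ (⊥ : P) = 0) (hcov : ∀ a b : P, a ⋖ b → ρ b = ρ a + 1) :
    ∀ n (s : Finset P), IsOC s → ρ (⊤ : P) - 1 - s.card ≤ n →
      ∃ f : Finset P, IsOC f ∧ s ⊆ f ∧ f.card = ρ (⊤ : P) - 1 := by
  intro n
  induction n with
  | zero =>
    intro s hs hn
    have := oc_card_le hbot hcov hs
    exact ⟨s, hs, subset_rfl, by omega⟩
  | succ n IH =>
    intro s hs hn
    have hle := oc_card_le hbot hcov hs
    rcases eq_or_lt_of_le hle with heq | hlt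
    · exact ⟨s, hs, subset_rfl, heq⟩
    · -- find a missing rank
      classical
      set T := (insert (⊥ : P) (insert ⊤ s)).image ρ with hT
      have hTsub : T ⊆ Finset.Icc 0 (ρ (⊤ : P)) := by
        intro m hm
        obtain ⟨e, he, rfl⟩ := Finset.mem_image.mp hm
        exact Finset.mem_Icc.mpr ⟨Nat.zero_le _, rankLe hcov e ⊤ le_top⟩
      have hTcard : T.card ≤ s.card + 2 := by
        calc T.card ≤ (insert (⊥ : P) (insert ⊤ s)).card := Finset.card_image_le
        _ ≤ (insert (⊤:P) s).card + 1 := Finset.card_insert_le _ _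
        _ ≤ s.card + 1 + 1 := by
            have := Finset.card_insert_le (⊤:P) s; omega
      have hex : ∃ r ∈ Finset.Icc 0 (ρ (⊤ : P)), r ∉ T := by
        by_contra hcon
        push_neg at hcon
        have hsub2 : Finset.Icc 0 (ρ (⊤ : P)) ⊆ T := fun r hr => hcon r hr
        have := Finset.card_le_card hsub2
        simp [Nat.card_Icc] at this
        omega
      obtain ⟨r, hrIcc, hrT⟩ := hex
      have hbotT : ρ (⊥ : P) ∈ T := Finset.mem_image.mpr ⟨⊥, by simp, rfl⟩
      have htopT : ρ (⊤ : P) ∈ T := Finset.mem_image.mpr ⟨⊤, by simp, rfl⟩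
      have h0r : ρ (⊥ : P) < r := by
        rcases Nat.lt_or_ge (ρ (⊥:P)) r with h | h
        · exact h
        · exfalso; rw [hbot] at h
          have : r = ρ (⊥:P) := by omega
          exact hrT (this ▸ hbotT)
      have hrtop : r < ρ (⊤ : P) := by
        have := Finset.mem_Icc.mp hrIcc
        rcases eq_or_lt_of_le this.2 with h | h
        · exact absurd (h ▸ htopT) hrT
        · exact h
      have hrs : ∀ e ∈ s, ρ e ≠ r := by
        intro e he heq
        exact hrT (Finset.mem_image.mpr ⟨e, by simp [he], heq⟩)
      obtain ⟨a, b, hab, har, hrb, hlo, hhi, hma, hmb⟩ := gap hcov hs hrs h0r hrtop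
      obtain ⟨c, hc, hcb⟩ := exists_cov_le hab
      have hρc : ρ c = ρ a + 1 := hcov a c hc
      have hcltb : c < b := lt_of_le_of_ne hcb (by
        intro h; subst h; omega)
      obtain ⟨hcs, hoc⟩ := gap_insert hcov hs hrs hlo hhi hma hmb hc.lt hcltb
      have hcard : (insert c s).card = s.card + 1 := Finset.card_insert_of_notMem hcs
      obtain ⟨f, hf, hsf, hfc⟩ := IH (insert c s) hoc (by omega)
      exact ⟨f, hf, subset_trans (Finset.subset_insert _ _) hsf, hfc⟩

lemma mod2Bdry_zero_eq_empty {C : Finset (Finset P)} (hC : C ≠ ∅) :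
    mod2Bdry C 0 = ∅ ↔ Even C.card := by
  classical
  have hbi : (C.biUnion fun f => f.powersetCard 0) = {∅} := by
    ext u
    simp only [Finset.mem_biUnion, Finset.powersetCard_zero, Finset.mem_singleton]
    constructor
    · rintro ⟨f, _, h⟩; exact h
    · rintro rfl
      obtain ⟨f, hf⟩ := Finset.nonempty_iff_ne_empty.mpr hC
      exact ⟨f, hf, rfl⟩
  have hfil : (C.filter fun f => (∅ : Finset P) ⊆ f) = C :=
    Finset.filter_true_of_mem (fun f _ => Finset.empty_subset f)
  rw [mod2Bdry, hbi, Finset.filter_singleton]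
  by_cases h : Even C.card
  · simp [hfil, h]
  · simp [hfil, h]

lemma singleton_mem_filter_one {p q : P} {f : Finset P} :
    f ∈ (intervalComplex p q).filter (fun f => f.card = 1) ↔
      ∃ x, (p < x ∧ x < q) ∧ f = {x} := by
  classical
  rw [Finset.mem_filter, mem_intervalComplex]
  constructor
  · rintro ⟨⟨-, h2, -⟩, hcard⟩
    obtain ⟨x, rfl⟩ := Finset.card_eq_one.mp hcard
    exact ⟨x, h2 x (Finset.mem_singleton_self x), rfl⟩
  · rintro ⟨x, hx, rfl⟩
    refine ⟨⟨Finset.singleton_nonempty x, ?_, ?_⟩, Finset.card_singleton x⟩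
    · intro a ha; rw [Finset.mem_singleton] at ha; subst ha; exact hx
    · intro a ha b hb
      rw [Finset.mem_singleton] at ha hb; subst ha; subst hb
      exact Or.inl (le_refl _)

open scoped Classical in
/-- If the open interval between `a` and `b` is a 0-sphere in the sense of
`htop`, then it has exactly two elements. -/
lemma interval_two (hcov : ∀ a b : P, a ⋖ b → ρ b = ρ a + 1)
    {a b : P} (hab : a < b) (hlen : ρ b - ρ a = 2)
    (htop : ∃! C : Finset (Finset P),
      C ⊆ (intervalComplex a b).filter
          (fun f => f.card = (ρ b - ρ a - 2) + 1) ∧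
      C ≠ ∅ ∧ mod2Bdry C (ρ b - ρ a - 2) = ∅) :
    (Finset.univ.filter (fun x : P => a < x ∧ x < b)).card = 2 := by
  classical
  rw [hlen] at htop
  norm_num at htop
  obtain ⟨C0, ⟨hC0sub, hC0ne, hC0bd⟩, huniq⟩ := htop
  set V := Finset.univ.filter (fun x : P => a < x ∧ x < b) with hV
  have hmemV : ∀ x : P, x ∈ V ↔ a < x ∧ x < b := by
    intro x; simp [hV]
  -- candidate cycles
  have hcand : ∀ x y : P, x ∈ V → y ∈ V → x ≠ y →
      ({{x}, {y}} : Finset (Finset P)) ⊆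
        (intervalComplex a b).filter (fun f => f.card = 1) ∧
      ({{x}, {y}} : Finset (Finset P)) ≠ ∅ ∧
      mod2Bdry ({{x}, {y}} : Finset (Finset P)) 0 = ∅ := by
    intro x y hx hy hxy
    have hxV := (hmemV x).mp hx
    have hyV := (hmemV y).mp hy
    have hne : ({x} : Finset P) ≠ {y} := by
      simpa using hxy
    refine ⟨?_, ?_, ?_⟩
    · intro f hf
      rcases Finset.mem_insert.mp hf with rfl | hf'
      · exact singleton_mem_filter_one.mpr ⟨x, hxV, rfl⟩
      · rw [Finset.mem_singleton] at hf'; subst hf'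
        exact singleton_mem_filter_one.mpr ⟨y, hyV, rfl⟩
    · simp
    · rw [mod2Bdry_zero_eq_empty (by simp)]
      rw [Finset.card_insert_of_notMem (by simpa using hne)]
      simp
  -- V has at least two elements
  have h2 : 2 ≤ V.card := by
    have hcard2 : 2 ≤ C0.card := by
      have hev : Even C0.card := by
        rcases Finset.eq_empty_or_nonempty C0 with rfl | hne
        · simp
        · exact (mod2Bdry_zero_eq_empty hC0ne).mp hC0bd
      have hpos : 0 < C0.card := Finset.card_pos.mpr
        (Finset.nonempty_iff_ne_empty.mpr hC0ne)
      rcases hev with ⟨k, hk⟩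
      omega
    have h1c : 1 < C0.card := by omega
    obtain ⟨f, hf, g, hg, hfg⟩ := Finset.one_lt_card.mp h1c
    obtain ⟨x, hx, rfl⟩ := singleton_mem_filter_one.mp (hC0sub hf)
    obtain ⟨y, hy, rfl⟩ := singleton_mem_filter_one.mp (hC0sub hg)
    have hxy : x ≠ y := fun h => hfg (by rw [h])
    have : ({x, y} : Finset P) ⊆ V := by
      intro z hz
      rcases Finset.mem_insert.mp hz with rfl | hz'
      · exact (hmemV z).mpr hx
      · rw [Finset.mem_singleton] at hz'; subst hz'; exact (hmemV z).mpr hy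
    calc 2 = ({x, y} : Finset P).card := by rw [Finset.card_insert_of_notMem (by simpa using hxy)]; simp
    _ ≤ V.card := Finset.card_le_card this
  -- V has at most two elements
  have h3 : ¬ 3 ≤ V.card := by
    intro h
    obtain ⟨W, hWsub, hWcard⟩ := Finset.exists_subset_card_eq h
    obtain ⟨x, y, z, hxy, hxz, hyz, rfl⟩ := Finset.card_eq_three.mp hWcard
    have hx : x ∈ V := hWsub (by simp)
    have hy : y ∈ V := hWsub (by simp)
    have hz : z ∈ V := hWsub (by simp)
    have h1 := hcand x y hx hy hxy
    have h2' := hcand x z hx hz hxz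
    have e1 := huniq _ ⟨h1.1, h1.2.1, h1.2.2⟩
    have e2 := huniq _ ⟨h2'.1, h2'.2.1, h2'.2.2⟩
    have : ({{x},{y}} : Finset (Finset P)) = {{x},{z}} := by rw [e1, e2]
    have hyin : ({y} : Finset P) ∈ ({{x},{z}} : Finset (Finset P)) := by
      rw [← this]; simp
    rcases Finset.mem_insert.mp hyin with h' | h'
    · exact hxy (by simpa using h'.symm)
    · rw [Finset.mem_singleton] at h'
      exact hyz (by simpa using h')
  omega

open scoped Classical in
lemma two_facets
    (hbot : ρ (⊥ : P) = 0) (hcov : ∀ a b : P, a ⋖ b → ρ b = ρ a + 1)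
    (htoplen : 2 ≤ ρ (⊤ : P))
    (htop : ∀ p q : P, p ≤ q → 2 ≤ ρ q - ρ p →
      ∃! C : Finset (Finset P),
        C ⊆ (intervalComplex p q).filter
            (fun f => f.card = (ρ q - ρ p - 2) + 1) ∧
        C ≠ ∅ ∧ mod2Bdry C (ρ q - ρ p - 2) = ∅)
    {t : Finset P} (ht : IsOC t) (htc : t.card = ρ (⊤ : P) - 2) :
    ((intervalComplex (⊥ : P) (⊤ : P)).filter
        (fun f => t ⊆ f ∧ f.card = ρ (⊤ : P) - 1)).card = 2 := by
  classical
  have hbotne : (⊥ : P) ≠ ⊤ := by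
    intro h
    rw [h] at hbot; omega
  have hbnt : (⊥ : P) ∉ t := fun h => absurd (ht.1 _ h).1 (lt_irrefl _)
  have htnt : (⊤ : P) ∉ t := fun h => absurd (ht.1 _ h).2 (lt_irrefl _)
  set th := insert (⊥ : P) (insert ⊤ t) with hth
  have hthcard : th.card = t.card + 2 := by
    rw [hth, Finset.card_insert_of_notMem (by simp [hbotne, hbnt]),
      Finset.card_insert_of_notMem htnt]
  have hinj : Set.InjOn ρ ↑th := by
    intro e he e' he' hee
    rcases hatcomp ht e he e' he' with h | h
    · rcases eq_or_lt_of_le h with h' | h'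
      · exact h'
      · exact absurd (rankLt hcov _ _ h') (by omega)
    · rcases eq_or_lt_of_le h with h' | h'
      · exact h'.symm
      · exact absurd (rankLt hcov _ _ h') (by omega)
  set T := th.image ρ with hT
  have hTcard : T.card = ρ (⊤ : P) := by
    rw [hT, Finset.card_image_of_injOn hinj, hthcard]
    omega
  have hTsub : T ⊆ Finset.Icc 0 (ρ (⊤ : P)) := by
    intro m hm
    obtain ⟨e, he, rfl⟩ := Finset.mem_image.mp hm
    exact Finset.mem_Icc.mpr ⟨Nat.zero_le _, rankLe hcov e ⊤ le_top⟩
  have hex : ∃ r ∈ Finset.Icc 0 (ρ (⊤ : P)), r ∉ T := by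
    by_contra hcon
    push_neg at hcon
    have := Finset.card_le_card (fun r hr => hcon r hr)
    simp [Nat.card_Icc, hTcard] at this
  obtain ⟨r, hrIcc, hrT⟩ := hex
  have hTeq : T = (Finset.Icc 0 (ρ (⊤ : P))).erase r := by
    apply Finset.eq_of_subset_of_card_le
    · intro m hm
      exact Finset.mem_erase.mpr ⟨fun h => hrT (h ▸ hm), hTsub hm⟩
    · rw [Finset.card_erase_of_mem hrIcc]
      simp [Nat.card_Icc, hTcard]
  have hmemT : ∀ m : ℕ, m ≤ ρ (⊤ : P) → m ≠ r → ∃ e ∈ th, ρ e = m := by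
    intro m hm hmr
    have : m ∈ T := by
      rw [hTeq]
      exact Finset.mem_erase.mpr ⟨hmr, Finset.mem_Icc.mpr ⟨Nat.zero_le _, hm⟩⟩
    obtain ⟨e, he, hee⟩ := Finset.mem_image.mp this
    exact ⟨e, he, hee⟩
  have hbotT : ρ (⊥ : P) ∈ T := Finset.mem_image.mpr ⟨⊥, by simp [hth], rfl⟩
  have htopT : ρ (⊤ : P) ∈ T := Finset.mem_image.mpr ⟨⊤, by simp [hth], rfl⟩
  have h0r : ρ (⊥ : P) < r := by
    rw [hbot]
    rcases Nat.eq_zero_or_pos r with rfl | h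
    · rw [← hbot] at hrT; exact absurd hbotT hrT
    · exact h
  have hrtop : r < ρ (⊤ : P) := by
    have := Finset.mem_Icc.mp hrIcc
    rcases eq_or_lt_of_le this.2 with h | h
    · exact absurd (h ▸ htopT) hrT
    · exact h
  have hrs : ∀ e ∈ t, ρ e ≠ r := by
    intro e he heq
    exact hrT (Finset.mem_image.mpr ⟨e, by simp [hth, he], heq⟩)
  obtain ⟨a, b, hab, har, hrb, hlo, hhi, hma, hmb⟩ := gap hcov ht hrs h0r hrtop
  -- the two ranks adjacent to the gap
  have hra : r = ρ a + 1 := by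
    by_contra h
    have h2 : ρ a + 1 < r := by omega
    obtain ⟨e, he, hee⟩ := hmemT (r - 1) (by omega) (by omega)
    rw [hth] at he
    simp only [Finset.mem_insert] at he
    rcases he with rfl | rfl | he
    · omega
    · omega
    · have := rankLe hcov e a (hlo e he (by omega))
      omega
  have hrb2 : ρ b = r + 1 := by
    by_contra h
    have h2 : r + 1 < ρ b := by omega
    have hble : ρ b ≤ ρ (⊤ : P) := rankLe hcov b ⊤ le_top
    obtain ⟨e, he, hee⟩ := hmemT (r + 1) (by omega) (by omega)
    rw [hth] at he
    simp only [Finset.mem_insert] at he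
    rcases he with rfl | rfl | he
    · omega
    · omega
    · have := rankLe hcov b e (hhi e he (by omega))
      omega
  -- the facets containing t are exactly the insertions of the gap interval
  have himage : (intervalComplex (⊥ : P) (⊤ : P)).filter
        (fun f => t ⊆ f ∧ f.card = ρ (⊤ : P) - 1) =
      (Finset.univ.filter (fun x : P => a < x ∧ x < b)).image
        (fun x => insert x t) := by
    ext f
    simp only [Finset.mem_filter, Finset.mem_image, Finset.mem_univ, true_and]
    constructor
    · rintro ⟨hfc, hsub, hcard⟩
      obtain ⟨hfne, hfoc⟩ := mem_iC.mp hfc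
      have hdiff : (f \ t).card = 1 := by
        rw [Finset.card_sdiff_of_subset hsub]
        omega
      obtain ⟨x, hx⟩ := Finset.card_eq_one.mp hdiff
      have hxft : x ∈ f \ t := hx ▸ Finset.mem_singleton_self x
      have hxf : x ∈ f := (Finset.mem_sdiff.mp hxft).1
      have hxt : x ∉ t := (Finset.mem_sdiff.mp hxft).2
      have hins : insert x t ⊆ f := Finset.insert_subset hxf hsub
      have hfx : f = insert x t := by
        apply (Finset.eq_of_subset_of_card_le hins ?_).symm
        rw [Finset.card_insert_of_notMem hxt]
        omega
      have hx0 : 0 < ρ x := by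
        have := rankLt hcov ⊥ x (hfoc.1 x hxf).1
        omega
      have hxtop : ρ x < ρ (⊤ : P) := rankLt hcov x ⊤ (hfoc.1 x hxf).2
      have hρx : ρ x = r := by
        by_contra h
        obtain ⟨e, he, hee⟩ := hmemT (ρ x) (by omega) h
        rw [hth] at he
        simp only [Finset.mem_insert] at he
        rcases he with rfl | rfl | he
        · omega
        · omega
        · have hef : e ∈ f := hsub he
          have hne : e ≠ x := fun h' => hxt (h' ▸ he)
          rcases hfoc.2 e hef x hxf with h' | h'
          · have := rankLt hcov e x (lt_of_le_of_ne h' hne)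
            omega
          · have := rankLt hcov x e (lt_of_le_of_ne h' (Ne.symm hne))
            omega
      have hax : a < x := by
        rcases hma with rfl | hat
        · exact (hfoc.1 x hxf).1
        · have haf : a ∈ f := hsub hat
          rcases hfoc.2 a haf x hxf with h' | h'
          · refine lt_of_le_of_ne h' (fun h'' => ?_)
            rw [h''] at har; omega
          · have := rankLe hcov x a h'
            omega
      have hxb : x < b := by
        rcases hmb with rfl | hbt
        · exact (hfoc.1 x hxf).2
        · have hbf : b ∈ f := hsub hbt
          rcases hfoc.2 x hxf b hbf with h' | h'
          · refine lt_of_le_of_ne h' (fun h'' => ?_)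
            rw [← h''] at hrb; omega
          · have := rankLe hcov b x h'
            omega
      exact ⟨x, ⟨hax, hxb⟩, hfx.symm⟩
    · rintro ⟨x, ⟨hax, hxb⟩, rfl⟩
      obtain ⟨hxt, hoc⟩ := gap_insert hcov ht hrs hlo hhi hma hmb hax hxb
      refine ⟨mem_iC.mpr ⟨Finset.insert_nonempty _ _, hoc⟩,
        Finset.subset_insert _ _, ?_⟩
      rw [Finset.card_insert_of_notMem hxt]
      omega
  rw [himage]
  rw [Finset.card_image_of_injOn ?_]
  · exact interval_two hcov hab (by omega) (htop a b hab.le (by omega))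
  · intro x hx y hy hxy
    simp only [Finset.coe_filter, Set.mem_setOf_eq, Finset.mem_univ, true_and] at hx hy
    have hxt : x ∉ t := (gap_insert hcov ht hrs hlo hhi hma hmb hx.1 hx.2).1
    have hxy' : insert x t = insert y t := hxy
    have : x ∈ insert y t := by
      rw [← hxy']; exact Finset.mem_insert_self x t
    rcases Finset.mem_insert.mp this with h | h
    · exact h
    · exact absurd h hxt

open scoped Classical in
lemma strong_conn
    (hbot : ρ (⊥ : P) = 0) (hcov : ∀ a b : P, a ⋖ b → ρ b = ρ a + 1)
    (htoplen : 2 ≤ ρ (⊤ : P))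
    (htop : ∀ p q : P, p ≤ q → 2 ≤ ρ q - ρ p →
      ∃! C : Finset (Finset P),
        C ⊆ (intervalComplex p q).filter
            (fun f => f.card = (ρ q - ρ p - 2) + 1) ∧
        C ≠ ∅ ∧ mod2Bdry C (ρ q - ρ p - 2) = ∅) :
    ∀ f ∈ (intervalComplex (⊥ : P) (⊤ : P)).filter
        (fun f => f.card = ρ (⊤ : P) - 1),
      ∀ g ∈ (intervalComplex (⊥ : P) (⊤ : P)).filter
        (fun f => f.card = ρ (⊤ : P) - 1),
        Relation.ReflTransGen
          (fun f' g' => f' ∈ intervalComplex (⊥ : P) (⊤ : P) ∧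
            g' ∈ intervalComplex (⊥ : P) (⊤ : P) ∧
            f'.card = ρ (⊤ : P) - 1 ∧ g'.card = ρ (⊤ : P) - 1 ∧
            (f' ∩ g').card = ρ (⊤ : P) - 2) f g := by
  classical
  set adj := fun f' g' : Finset P => f' ∈ intervalComplex (⊥ : P) (⊤ : P) ∧
      g' ∈ intervalComplex (⊥ : P) (⊤ : P) ∧
      f'.card = ρ (⊤ : P) - 1 ∧ g'.card = ρ (⊤ : P) - 1 ∧
      (f' ∩ g').card = ρ (⊤ : P) - 2 with hadj
  intro f hf g hg
  rw [Finset.mem_filter] at hf hg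
  -- key adjacency claim
  have hA : ∀ (u f1 f2 : Finset P), u ⊆ f1 → u ⊆ f2 → f1 ≠ f2 →
      f1 ∈ intervalComplex (⊥ : P) (⊤ : P) → f2 ∈ intervalComplex (⊥ : P) (⊤ : P) →
      f1.card = ρ (⊤ : P) - 1 → f2.card = ρ (⊤ : P) - 1 →
      u.card = ρ (⊤ : P) - 2 → adj f1 f2 := by
    intro u f1 f2 hu1 hu2 hne h1 h2 hc1 hc2 huc
    refine ⟨h1, h2, hc1, hc2, ?_⟩
    have hlow : ρ (⊤ : P) - 2 ≤ (f1 ∩ f2).card := by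
      rw [← huc]
      exact Finset.card_le_card (Finset.subset_inter hu1 hu2)
    have hhigh : (f1 ∩ f2).card ≤ f1.card := Finset.card_le_card Finset.inter_subset_left
    have hneq : (f1 ∩ f2).card ≠ ρ (⊤ : P) - 1 := by
      intro hcontra
      have heq1 : f1 ∩ f2 = f1 := Finset.eq_of_subset_of_card_le
        Finset.inter_subset_left (by omega)
      have hsub12 : f1 ⊆ f2 := by rw [← heq1]; exact Finset.inter_subset_right
      exact hne (Finset.eq_of_subset_of_card_le hsub12 (by omega))
    omega
  -- the reachable-component cycle
  have hD : ∀ h0 : Finset P, h0 ∈ intervalComplex (⊥ : P) (⊤ : P) →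
      h0.card = ρ (⊤ : P) - 1 →
      ((intervalComplex (⊥ : P) (⊤ : P)).filter
          (fun f' => f'.card = ρ (⊤ : P) - 1 ∧ Relation.ReflTransGen adj h0 f')) ⊆
        (intervalComplex (⊥ : P) (⊤ : P)).filter
          (fun f' => f'.card = (ρ (⊤ : P) - ρ (⊥ : P) - 2) + 1) ∧
      ((intervalComplex (⊥ : P) (⊤ : P)).filter
          (fun f' => f'.card = ρ (⊤ : P) - 1 ∧ Relation.ReflTransGen adj h0 f')) ≠ ∅ ∧
      mod2Bdry ((intervalComplex (⊥ : P) (⊤ : P)).filter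
          (fun f' => f'.card = ρ (⊤ : P) - 1 ∧ Relation.ReflTransGen adj h0 f'))
        (ρ (⊤ : P) - ρ (⊥ : P) - 2) = ∅ := by
    intro h0 h0m h0c
    set D := (intervalComplex (⊥ : P) (⊤ : P)).filter
        (fun f' => f'.card = ρ (⊤ : P) - 1 ∧ Relation.ReflTransGen adj h0 f') with hDdef
    have harith : (ρ (⊤ : P) - ρ (⊥ : P) - 2) + 1 = ρ (⊤ : P) - 1 := by
      rw [hbot]; omega
    have harith2 : ρ (⊤ : P) - ρ (⊥ : P) - 2 = ρ (⊤ : P) - 2 := by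
      rw [hbot]; omega
    refine ⟨?_, ?_, ?_⟩
    · intro x hx
      rw [hDdef, Finset.mem_filter] at hx
      rw [Finset.mem_filter, harith]
      exact ⟨hx.1, hx.2.1⟩
    · have : h0 ∈ D := by
        rw [hDdef, Finset.mem_filter]
        exact ⟨h0m, h0c, Relation.ReflTransGen.refl⟩
      exact fun hcon => by rw [hcon] at this; exact Finset.notMem_empty _ this
    · rw [harith2, mod2Bdry, Finset.filter_eq_empty_iff]
      intro u hu
      rw [Finset.mem_biUnion] at hu
      obtain ⟨f', hf'D, hupc⟩ := hu
      rw [Finset.mem_powersetCard] at hupc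
      obtain ⟨husub, hucard⟩ := hupc
      have hf'D' := hf'D
      rw [hDdef, Finset.mem_filter] at hf'D'
      obtain ⟨hf'm, hf'c, hf'r⟩ := hf'D'
      -- u is a chain
      have huoc : IsOC u := isOC_subset husub (mem_iC.mp hf'm).2
      have hW := two_facets hbot hcov htoplen htop huoc hucard
      obtain ⟨f1, f2, hf12, hWeq⟩ := Finset.card_eq_two.mp hW
      have hWmem : ∀ x : Finset P, x ∈ intervalComplex (⊥ : P) (⊤ : P) →
          u ⊆ x → x.card = ρ (⊤ : P) - 1 → x = f1 ∨ x = f2 := by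
        intro x hxm hxu hxc
        have : x ∈ ({f1, f2} : Finset (Finset P)) := by
          rw [← hWeq, Finset.mem_filter]
          exact ⟨hxm, hxu, hxc⟩
        simpa using this
      have hf1W : f1 ∈ (intervalComplex (⊥ : P) (⊤ : P)).filter
          (fun f => u ⊆ f ∧ f.card = ρ (⊤ : P) - 1) := by
        rw [hWeq]; simp
      have hf2W : f2 ∈ (intervalComplex (⊥ : P) (⊤ : P)).filter
          (fun f => u ⊆ f ∧ f.card = ρ (⊤ : P) - 1) := by
        rw [hWeq]; simp
      rw [Finset.mem_filter] at hf1W hf2W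
      -- membership in D transfers between f1 and f2
      have hkey : ∀ x y : Finset P, x ∈ intervalComplex (⊥ : P) (⊤ : P) →
          y ∈ intervalComplex (⊥ : P) (⊤ : P) → u ⊆ x → u ⊆ y →
          x.card = ρ (⊤ : P) - 1 → y.card = ρ (⊤ : P) - 1 →
          x ∈ D → y ∈ D := by
        intro x y hxm hym hxu hyu hxc hyc hxD
        rcases eq_or_ne x y with rfl | hne
        · exact hxD
        · rw [hDdef, Finset.mem_filter] at hxD ⊢
          exact ⟨hym, hyc, hxD.2.2.tail (hA u x y hxu hyu hne hxm hym hxc hyc hucard)⟩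
      have hDsubW : D.filter (fun f => u ⊆ f) ⊆ ({f1, f2} : Finset (Finset P)) := by
        intro x hx
        rw [Finset.mem_filter, hDdef, Finset.mem_filter] at hx
        rcases hWmem x hx.1.1 hx.2 hx.1.2.1 with h | h <;> simp [h]
      have heven : Even ((D.filter fun f => u ⊆ f).card) := by
        by_cases hf1D : f1 ∈ D
        · have hf2D : f2 ∈ D := hkey f1 f2 hf1W.1 hf2W.1 hf1W.2.1 hf2W.2.1
            hf1W.2.2 hf2W.2.2 hf1D
          have : D.filter (fun f => u ⊆ f) = {f1, f2} := by
            apply Finset.Subset.antisymm hDsubW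
            intro x hx
            rcases Finset.mem_insert.mp hx with rfl | hx'
            · exact Finset.mem_filter.mpr ⟨hf1D, hf1W.2.1⟩
            · rw [Finset.mem_singleton] at hx'
              subst hx'
              exact Finset.mem_filter.mpr ⟨hf2D, hf2W.2.1⟩
          rw [this, Finset.card_insert_of_notMem (by simpa using hf12)]
          simp
        · have : D.filter (fun f => u ⊆ f) = ∅ := by
            rw [Finset.eq_empty_iff_forall_notMem]
            intro x hx
            have hxD := (Finset.mem_filter.mp hx).1
            have hxu := (Finset.mem_filter.mp hx).2
            have hxDm := hxD
            rw [hDdef, Finset.mem_filter] at hxDm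
            rcases hWmem x hxDm.1 hxu hxDm.2.1 with rfl | rfl
            · exact hf1D hxD
            · exact hf1D (hkey x f1 hxDm.1 hf1W.1 hxu hf1W.2.1 hxDm.2.1
                hf1W.2.2 hxD)
          rw [this]
          simp
      simpa using heven
  -- apply uniqueness
  have hmain := htop (⊥ : P) (⊤ : P) bot_le (by rw [hbot]; omega)
  obtain ⟨C0, _, huniq⟩ := hmain
  have h1 := hD f hf.1 hf.2
  have h2 := hD g hg.1 hg.2
  have e1 := huniq _ ⟨h1.1, h1.2.1, h1.2.2⟩
  have e2 := huniq _ ⟨h2.1, h2.2.1, h2.2.2⟩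
  have heq : ((intervalComplex (⊥ : P) (⊤ : P)).filter
      (fun f' => f'.card = ρ (⊤ : P) - 1 ∧ Relation.ReflTransGen adj f f')) =
      ((intervalComplex (⊥ : P) (⊤ : P)).filter
      (fun f' => f'.card = ρ (⊤ : P) - 1 ∧ Relation.ReflTransGen adj g f')) := by
    rw [e1, e2]
  have hgmem : g ∈ (intervalComplex (⊥ : P) (⊤ : P)).filter
      (fun f' => f'.card = ρ (⊤ : P) - 1 ∧ Relation.ReflTransGen adj g f') :=
    Finset.mem_filter.mpr ⟨hg.1, hg.2, Relation.ReflTransGen.refl⟩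
  rw [← heq, Finset.mem_filter] at hgmem
  exact hgmem.2.2

end


/-- Let `P` be a bounded finite graded poset in which every interval `[p,q]`
of length at least `2` is a `ℤ/2`-homology sphere of top dimension
`d = ρ(q) − ρ(p) − 2` (every `i`-cycle with `i < d` bounds, and up to the zero
chain there is a unique `d`-cycle).  Then the order complex of the proper part
of `P` is a pseudomanifold: it is pure of dimension `ρ(⊤) − 2`, every
codimension-1 face lies in exactly two facets, and it is strongly connected. -/
theorem stmt_17 {P : Type*} [PartialOrder P] [Fintype P] [DecidableEq P]
    [BoundedOrder P]
    (ρ : P → ℕ) (hbot : ρ ⊥ = 0) (hcov : ∀ a b : P, a ⋖ b → ρ b = ρ a + 1)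
    (htoplen : 2 ≤ ρ (⊤ : P))
    (hvanish : ∀ p q : P, p ≤ q → 2 ≤ ρ q - ρ p → ∀ i : ℕ, i < ρ q - ρ p - 2 →
      ∀ C : Finset (Finset P),
        C ⊆ (intervalComplex p q).filter (fun f => f.card = i + 1) →
        mod2Bdry C i = ∅ →
        ∃ D : Finset (Finset P),
          D ⊆ (intervalComplex p q).filter (fun f => f.card = i + 2) ∧
          mod2Bdry D (i + 1) = C)
    (htop : ∀ p q : P, p ≤ q → 2 ≤ ρ q - ρ p →
      ∃! C : Finset (Finset P),
        C ⊆ (intervalComplex p q).filter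
            (fun f => f.card = (ρ q - ρ p - 2) + 1) ∧
        C ≠ ∅ ∧ mod2Bdry C (ρ q - ρ p - 2) = ∅) :
    (∀ s ∈ intervalComplex (⊥ : P) (⊤ : P),
      ∃ f ∈ intervalComplex (⊥ : P) (⊤ : P), s ⊆ f ∧ f.card = ρ (⊤ : P) - 1) ∧
    (∀ t : Finset P, (t = ∅ ∨ t ∈ intervalComplex (⊥ : P) (⊤ : P)) →
      t.card = ρ (⊤ : P) - 2 →
      ((intervalComplex (⊥ : P) (⊤ : P)).filter
          (fun f => t ⊆ f ∧ f.card = ρ (⊤ : P) - 1)).card = 2) ∧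
    (∀ f ∈ (intervalComplex (⊥ : P) (⊤ : P)).filter
        (fun f => f.card = ρ (⊤ : P) - 1),
      ∀ g ∈ (intervalComplex (⊥ : P) (⊤ : P)).filter
        (fun f => f.card = ρ (⊤ : P) - 1),
        Relation.ReflTransGen
          (fun f' g' => f' ∈ intervalComplex (⊥ : P) (⊤ : P) ∧
            g' ∈ intervalComplex (⊥ : P) (⊤ : P) ∧
            f'.card = ρ (⊤ : P) - 1 ∧ g'.card = ρ (⊤ : P) - 1 ∧
            (f' ∩ g').card = ρ (⊤ : P) - 2) f g) := by
  refine ⟨?_, ?_, ?_⟩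
  · intro s hs
    obtain ⟨hne, hoc⟩ := mem_iC.mp hs
    obtain ⟨f, hfoc, hsf, hfc⟩ :=
      oc_extend hbot hcov (ρ (⊤ : P) - 1 - s.card) s hoc le_rfl
    refine ⟨f, mem_iC.mpr ⟨?_, hfoc⟩, hsf, hfc⟩
    rw [← Finset.card_pos, hfc]
    omega
  · intro t hyp hcard
    have hoc : IsOC t := by
      rcases hyp with rfl | h
      · exact ⟨fun a ha => absurd ha (Finset.notMem_empty a),
          fun a ha => absurd ha (Finset.notMem_empty a)⟩
      · exact (mem_iC.mp h).2
    exact two_facets hbot hcov htoplen htop hoc hcard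
  · exact strong_conn hbot hcov htoplen htop
end
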